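/- Consider the process in which S₁ ~ θ on 𝒮, the demand X₁, X₂, … is i.i.d. ~ P_X and independent of S₁, at each time t the output Y_t is drawn (conditionally independently of the past given W_t) according to the structured policy b(· | W_t) where W_t = S_t − X_t, and S_{t+1} = S_t + Y_t − X_t. Then for every horizon T the outputs Y₁, …, Y_T are mutually independent and each Y_t has marginal pmf P_X; i.e., the output process is statistically indistinguishable from the demand process. -/

import Mathlib

open Finset
open scoped Classical

namespace SmartMeter

/-! ### Basic information measures for finitely supported distributions.
All entropies and mutual informations are in bits (base-2 logarithms). -/

/-- Probability that the random variable `Z` takes the value `z` under the pmf `p`. -/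
noncomputable def pr {Ω α : Type*} [Fintype Ω] [DecidableEq α]
    (p : Ω → ℝ) (Z : Ω → α) (z : α) : ℝ :=
  ∑ ω ∈ Finset.univ.filter (fun ω => Z ω = z), p ω

/-- Shannon entropy (in bits) of the random variable `Z` under the pmf `p`. -/
noncomputable def ent {Ω α : Type*} [Fintype Ω] [DecidableEq α]
    (p : Ω → ℝ) (Z : Ω → α) : ℝ :=
  -∑ z ∈ Finset.univ.image Z, pr p Z z * Real.logb 2 (pr p Z z)

/-- Mutual information `I(A; B)`. -/
noncomputable def mutInfo {Ω α β : Type*} [Fintype Ω] [DecidableEq α] [DecidableEq β]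
    (p : Ω → ℝ) (A : Ω → α) (B : Ω → β) : ℝ :=
  ent p A + ent p B - ent p (fun ω => (A ω, B ω))

/-- Conditional entropy `H(A | C)`. -/
noncomputable def condEnt {Ω α γ : Type*} [Fintype Ω] [DecidableEq α] [DecidableEq γ]
    (p : Ω → ℝ) (A : Ω → α) (C : Ω → γ) : ℝ :=
  ent p (fun ω => (A ω, C ω)) - ent p C

/-- Conditional mutual information `I(A; B | C)`. -/
noncomputable def condMutInfo {Ω α β γ : Type*} [Fintype Ω] [DecidableEq α] [DecidableEq β]
    [DecidableEq γ] (p : Ω → ℝ) (A : Ω → α) (B : Ω → β) (C : Ω → γ) : ℝ :=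
  ent p (fun ω => (A ω, C ω)) + ent p (fun ω => (B ω, C ω))
    - ent p (fun ω => (A ω, B ω, C ω)) - ent p C

/-- `p` is a probability mass function on the finite type `Ω`. -/
def IsPMF {Ω : Type*} [Fintype Ω] (p : Ω → ℝ) : Prop :=
  (∀ ω, 0 ≤ p ω) ∧ ∑ ω, p ω = 1

/-- Extension of a pmf on `{0, …, n}` to an integer-indexed function (zero out of range). -/
noncomputable def extZ {n : ℕ} (f : Fin (n + 1) → ℝ) (k : ℤ) : ℝ :=
  if h : 0 ≤ k ∧ k ≤ (n : ℤ) then f ⟨k.toNat, by omega⟩ else 0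

/-! ### The single-letter quantity `J*` -/

/-- `I(S - X; X)` for independent `X ~ PX` on `{0,…,mx}` and `S ~ θ` on `{0,…,ms}`. -/
noncomputable def iidMI (mx ms : ℕ) (PX : Fin (mx + 1) → ℝ) (θ : Fin (ms + 1) → ℝ) : ℝ :=
  mutInfo (fun ω : Fin (mx + 1) × Fin (ms + 1) => PX ω.1 * θ ω.2)
    (fun ω => ((ω.2 : ℕ) : ℤ) - ((ω.1 : ℕ) : ℤ)) (fun ω => ω.1)

/-- `J* = min over pmfs θ on 𝒮 of I(S - X; X)`. -/
noncomputable def Jstar (mx ms : ℕ) (PX : Fin (mx + 1) → ℝ) : ℝ :=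
  sInf {r : ℝ | ∃ θ : Fin (ms + 1) → ℝ, IsPMF θ ∧ iidMI mx ms PX θ = r}

/-! ### The structured policy `b*` -/

/-- `ξ(w) = Σ_{(x,s) : s - x = w} PX(x) θ(s)`, the pmf of `W = S - X`. -/
noncomputable def xiOf (mx ms : ℕ) (PX : Fin (mx + 1) → ℝ) (θ : Fin (ms + 1) → ℝ)
    (w : ℤ) : ℝ :=
  ∑ x : Fin (mx + 1), ∑ s : Fin (ms + 1),
    if ((s : ℕ) : ℤ) - ((x : ℕ) : ℤ) = w then PX x * θ s else 0

/-- The structured policy with respect to `(θ, ξ)`: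
`b(y|w) = PX(y) θ(y + w) / ξ(w)` for `y ∈ 𝒳 ∩ 𝒴₀(w)` (when `ξ(w) > 0`), else `0`. -/
noncomputable def bstar (mx my ms : ℕ) (PX : Fin (mx + 1) → ℝ) (θ : Fin (ms + 1) → ℝ)
    (w : ℤ) (y : Fin (my + 1)) : ℝ :=
  if xiOf mx ms PX θ w = 0 then 0
  else extZ PX ((y : ℕ) : ℤ) * extZ θ (((y : ℕ) : ℤ) + w) / xiOf mx ms PX θ w

/-! ### Trajectory spaces, policies and induced joint laws.
Time is indexed from `0`; `ω = (s₁, x, y)` records the initial battery state `S₁ = ω.1`,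
the demands `X_{t+1} = ω.2.1 t` and the outputs `Y_{t+1} = ω.2.2 t` for `t = 0, …, T-1`. -/

/-- Trajectories of horizon `T`. -/
abbrev Traj (mx my ms T : ℕ) :=
  Fin (ms + 1) × (Fin T → Fin (mx + 1)) × (Fin T → Fin (my + 1))

variable {mx my ms T : ℕ}

/-- Demand at (0-based) time `t`, as an integer (junk value `0` for `t ≥ T`). -/
def Xat (ω : Traj mx my ms T) (t : ℕ) : ℤ :=
  if h : t < T then ((ω.2.1 ⟨t, h⟩ : ℕ) : ℤ) else 0

/-- Output at (0-based) time `t`, as an integer (junk value `0` for `t ≥ T`). -/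
def Yat (ω : Traj mx my ms T) (t : ℕ) : ℤ :=
  if h : t < T then ((ω.2.2 ⟨t, h⟩ : ℕ) : ℤ) else 0

/-- Battery state at (0-based) time `t`: `S_{t+1} = S_t + Y_t - X_t`, `Sat ω 0 = S₁`. -/
def Sat (ω : Traj mx my ms T) (t : ℕ) : ℤ :=
  ((ω.1 : ℕ) : ℤ) + ∑ i ∈ Finset.range t, (Yat ω i - Xat ω i)

/-- `W_t = S_t - X_t`. -/
def Wat (ω : Traj mx my ms T) (t : ℕ) : ℤ := Sat ω t - Xat ω t

/-- A general causal (class `Q_A`) randomized battery policy: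
`q_t(y_t | x^t, s^t, y^{t-1})`; since `s^t` is determined by `(s₁, x^{t-1}, y^{t-1})`,
the policy is a function of `(x^t, s₁, y^{t-1})`. -/
def PolicyA (mx my ms : ℕ) : Type :=
  (t : ℕ) → (Fin (t + 1) → Fin (mx + 1)) → Fin (ms + 1) → (Fin t → Fin (my + 1)) →
    Fin (my + 1) → ℝ

/-- A class-`Q_B` policy: `q_t(y_t | x_t, s_t, y^{t-1})`. -/
def PolicyB (mx my ms : ℕ) : Type :=
  (t : ℕ) → Fin (mx + 1) → ℤ → (Fin t → Fin (my + 1)) → Fin (my + 1) → ℝ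

/-- The battery state `S_t` computed from `s₁` and the history `(x^t, y^{t-1})`. -/
def hstate {t : ℕ} (s1 : Fin (ms + 1)) (x : Fin (t + 1) → Fin (mx + 1))
    (y : Fin t → Fin (my + 1)) : ℤ :=
  ((s1 : ℕ) : ℤ) + ∑ i : Fin t, (((y i : ℕ) : ℤ) - ((x i.castSucc : ℕ) : ℤ))

/-- Each `q_t(· | x^t, s^t, y^{t-1})` is a pmf on `𝒴`. -/
def CondPMFA (q : PolicyA mx my ms) : Prop :=
  ∀ (t : ℕ) (x : Fin (t + 1) → Fin (mx + 1)) (s1 : Fin (ms + 1)) (y : Fin t → Fin (my + 1)),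
    (∀ yt, 0 ≤ q t x s1 y yt) ∧ ∑ yt, q t x s1 y yt = 1

/-- Feasibility of a class-`Q_A` policy: conditional pmfs supported on
`𝒴₀(s_t - x_t) = {y ∈ 𝒴 : s_t - x_t + y ∈ 𝒮}`. -/
def FeasibleA (q : PolicyA mx my ms) : Prop :=
  CondPMFA q ∧
  ∀ (t : ℕ) (x : Fin (t + 1) → Fin (mx + 1)) (s1 : Fin (ms + 1)) (y : Fin t → Fin (my + 1)),
    ∀ yt, q t x s1 y yt ≠ 0 →
      0 ≤ hstate s1 x y - ((x (Fin.last t) : ℕ) : ℤ) + ((yt : ℕ) : ℤ) ∧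
      hstate s1 x y - ((x (Fin.last t) : ℕ) : ℤ) + ((yt : ℕ) : ℤ) ≤ (ms : ℤ)

/-- Each `q_t(· | x_t, s_t, y^{t-1})` is a pmf on `𝒴`. -/
def CondPMFB (q : PolicyB mx my ms) : Prop :=
  ∀ (t : ℕ) (xt : Fin (mx + 1)) (s : ℤ) (y : Fin t → Fin (my + 1)),
    (∀ yt, 0 ≤ q t xt s y yt) ∧ ∑ yt, q t xt s y yt = 1

/-- Feasibility of a class-`Q_B` policy. -/
def FeasibleB (q : PolicyB mx my ms) : Prop :=
  CondPMFB q ∧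
  ∀ (t : ℕ) (xt : Fin (mx + 1)) (s : ℤ) (y : Fin t → Fin (my + 1)),
    0 ≤ s → s ≤ (ms : ℤ) →
    ∀ yt, q t xt s y yt ≠ 0 →
      0 ≤ s - ((xt : ℕ) : ℤ) + ((yt : ℕ) : ℤ) ∧
      s - ((xt : ℕ) : ℤ) + ((yt : ℕ) : ℤ) ≤ (ms : ℤ)

/-- The demand prefix `x^t = (x_0, …, x_t)` of a trajectory. -/
def prefX (ω : Traj mx my ms T) (t : Fin T) : Fin ((t : ℕ) + 1) → Fin (mx + 1) :=
  fun i => ω.2.1 ⟨(i : ℕ), lt_of_le_of_lt (Nat.lt_succ_iff.mp i.isLt) t.isLt⟩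

/-- The output prefix `y^{t-1} = (y_0, …, y_{t-1})` of a trajectory. -/
def prefY (ω : Traj mx my ms T) (t : Fin T) : Fin (t : ℕ) → Fin (my + 1) :=
  fun i => ω.2.2 ⟨(i : ℕ), i.isLt.trans t.isLt⟩

/-- Joint law on trajectories induced by i.i.d. demand `PX`, initial battery pmf `PS1`
(independent of the demand), and a class-`Q_A` policy `q`. -/
noncomputable def jointA (PS1 : Fin (ms + 1) → ℝ) (PX : Fin (mx + 1) → ℝ)
    (q : PolicyA mx my ms) (T : ℕ) (ω : Traj mx my ms T) : ℝ :=
  PS1 ω.1 * ∏ t : Fin T,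
    (PX (ω.2.1 t) * q (t : ℕ) (prefX ω t) ω.1 (prefY ω t) (ω.2.2 t))

/-- Weight of a demand trajectory under a Markov chain `(PX1, Qm)`. -/
noncomputable def markovWt (PX1 : Fin (mx + 1) → ℝ) (Qm : Fin (mx + 1) → Fin (mx + 1) → ℝ)
    {T : ℕ} (x : Fin T → Fin (mx + 1)) : ℝ :=
  ∏ t : Fin T,
    if _h : (t : ℕ) = 0 then PX1 (x t)
    else Qm (x ⟨(t : ℕ) - 1, lt_of_le_of_lt (Nat.sub_le _ _) t.isLt⟩) (x t)

/-- Joint law on trajectories induced by Markov demand and a class-`Q_A` policy. -/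
noncomputable def jointAMarkov (PS1 : Fin (ms + 1) → ℝ) (PX1 : Fin (mx + 1) → ℝ)
    (Qm : Fin (mx + 1) → Fin (mx + 1) → ℝ) (q : PolicyA mx my ms) (T : ℕ)
    (ω : Traj mx my ms T) : ℝ :=
  PS1 ω.1 * markovWt PX1 Qm ω.2.1 *
    ∏ t : Fin T, q (t : ℕ) (prefX ω t) ω.1 (prefY ω t) (ω.2.2 t)

/-- Joint law on trajectories induced by Markov demand and a class-`Q_B` policy. -/
noncomputable def jointBMarkov (PS1 : Fin (ms + 1) → ℝ) (PX1 : Fin (mx + 1) → ℝ)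
    (Qm : Fin (mx + 1) → Fin (mx + 1) → ℝ) (q : PolicyB mx my ms) (T : ℕ)
    (ω : Traj mx my ms T) : ℝ :=
  PS1 ω.1 * markovWt PX1 Qm ω.2.1 *
    ∏ t : Fin T, q (t : ℕ) (ω.2.1 t) (Sat ω (t : ℕ)) (prefY ω t) (ω.2.2 t)

/-- The memoryless time-invariant policy `q_t(y | x, s) = b*(y | s - x)`, as a member of the
class of general causal policies. -/
noncomputable def structuredPolicyA (mx my ms : ℕ) (PX : Fin (mx + 1) → ℝ)
    (θ : Fin (ms + 1) → ℝ) : PolicyA mx my ms :=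
  fun t x s1 y yt => bstar mx my ms PX θ (hstate s1 x y - ((x (Fin.last t) : ℕ) : ℤ)) yt

/-!
Under the structured policy the pair `(Y^t, S_{t+1})` has law `P_X^{⊗t} ⊗ θ` for every `t`.
Inductively, if the past outputs are independent of the current state `S ~ θ`, then
`W = S - X` has law `ξ`, and the identity `b(y|w) ξ(w) = P_X(y) θ(y + w)` says that the next
output is `~ P_X` and the next state `y + w` is `~ θ`, jointly independent of the past outputs.
Summing out the final state gives the joint law of the outputs, and the marginals of a product
pmf are its factors.
-/

section ExtZ

variable {n : ℕ}

lemma extZ_nonneg {f : Fin (n + 1) → ℝ} (hf : ∀ k, 0 ≤ f k) (j : ℤ) : 0 ≤ extZ f j := by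
  unfold extZ
  split_ifs
  exacts [hf _, le_rfl]

variable (f : Fin (n + 1) → ℝ)

lemma extZ_natCast (k : Fin (n + 1)) : extZ f ((k : ℕ) : ℤ) = f k := by
  rw [extZ, dif_pos ⟨by positivity, by exact_mod_cast Nat.lt_succ_iff.mp k.isLt⟩]
  simp

lemma extZ_eq_sum_ite (j : ℤ) :
    extZ f j = ∑ k : Fin (n + 1), if ((k : ℕ) : ℤ) = j then f k else 0 := by
  by_cases hj : 0 ≤ j ∧ j ≤ n
  · rw [Finset.sum_eq_single_of_mem ⟨j.toNat, by omega⟩ (mem_univ _)]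
    · simp [extZ, hj, Int.toNat_of_nonneg hj.1]
    · intro k _ hk
      exact if_neg fun h => hk (Fin.ext (by simp only [← h, Int.toNat_natCast]))
  · rw [extZ, dif_neg hj]
    exact (Finset.sum_eq_zero fun k _ => if_neg fun h => hj (by omega)).symm

lemma sum_extZ_eq_sum {I : Finset ℤ} (hI : ∀ k : Fin (n + 1), ((k : ℕ) : ℤ) ∈ I) :
    ∑ j ∈ I, extZ f j = ∑ k, f k := by
  let cast : Fin (n + 1) ↪ ℤ :=
    ⟨fun k => ((k : ℕ) : ℤ), fun _ _ h => Fin.ext (Nat.cast_injective (R := ℤ) h)⟩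
  calc ∑ j ∈ I, extZ f j = ∑ j ∈ univ.map cast, extZ f j := by
        refine (Finset.sum_subset (fun j hj => ?_) fun j _ hj => ?_).symm
        · obtain ⟨k, -, rfl⟩ := Finset.mem_map.mp hj
          exact hI k
        · refine dif_neg fun hj' => hj <|
            Finset.mem_map.mpr ⟨⟨j.toNat, by omega⟩, mem_univ _, ?_⟩
          exact Int.toNat_of_nonneg hj'.1
    _ = ∑ k, f k := by
        rw [Finset.sum_map]
        exact Finset.sum_congr rfl fun k _ => extZ_natCast f k

lemma sum_extZ_of_le {m : ℕ} (h : n ≤ m) :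
    ∑ z : Fin (m + 1), extZ f ((z : ℕ) : ℤ) = ∑ k, f k := by
  rw [← sum_extZ_eq_sum f (I := univ.image fun z : Fin (m + 1) => ((z : ℕ) : ℤ)),
    Finset.sum_image fun _ _ _ _ hz => Fin.ext (Nat.cast_injective (R := ℤ) hz)]
  exact fun k => Finset.mem_image.mpr ⟨⟨k, by omega⟩, mem_univ _, rfl⟩

end ExtZ

section Pr

variable {Ω α β : Type*} [Fintype Ω] [DecidableEq α] [DecidableEq β] (p : Ω → ℝ)

lemma pr_comp [Fintype α] (Z : Ω → α) (g : α → β) (b : β) :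
    pr p (fun ω => g (Z ω)) b = ∑ a with g a = b, pr p Z a := by
  unfold pr
  rw [← Finset.sum_fiberwise_of_maps_to (s := univ.filter fun ω => g (Z ω) = b) (g := Z)
    (t := univ.filter fun a => g a = b) (by simp)]
  refine Finset.sum_congr rfl fun a ha => Finset.sum_congr ?_ fun _ _ => rfl
  ext ω
  simp only [Finset.mem_filter, mem_univ, true_and] at ha ⊢
  constructor
  · exact And.right
  · rintro rfl; exact ⟨ha, rfl⟩

lemma pr_eq_sum_pr_prodMk (Z : Ω → α) (W : Ω → β) (a : α) :
    pr p Z a = ∑ b ∈ univ.image W, pr p (fun ω => (Z ω, W ω)) (a, b) := by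
  unfold pr
  rw [← Finset.sum_fiberwise_of_maps_to (s := univ.filter fun ω => Z ω = a) (g := W)
    (t := univ.image W) (by simp)]
  simp only [Finset.filter_filter, Prod.mk.injEq]

end Pr

lemma sum_prod_filter_apply_eq {ι α R : Type*} [Fintype ι] [DecidableEq ι] [Fintype α]
    [DecidableEq α] [CommSemiring R] {f : α → R} (hf : ∑ a, f a = 1) (i : ι) (a : α) :
    ∑ x : ι → α with x i = a, ∏ j, f (x j) = f a := by
  have hfilter : univ.filter (fun x : ι → α => x i = a)
      = Fintype.piFinset fun j => if j = i then {a} else univ := by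
    ext x
    simp only [Finset.mem_filter, mem_univ, true_and, Fintype.mem_piFinset]
    constructor
    · rintro rfl j
      split_ifs with hj <;> simp [hj]
    · intro hx
      simpa using hx i
  rw [hfilter, ← Finset.prod_univ_sum]
  simp [apply_ite (fun s : Finset α => ∑ b ∈ s, f b), hf]

section StructuredPolicy

variable {PX : Fin (mx + 1) → ℝ} {θ : Fin (ms + 1) → ℝ}

lemma xiOf_eq_sum_extZ (w : ℤ) :
    xiOf mx ms PX θ w = ∑ x, PX x * extZ θ (w + ((x : ℕ) : ℤ)) := by
  refine Finset.sum_congr rfl fun x _ => ?_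
  rw [extZ_eq_sum_ite, Finset.mul_sum]
  refine Finset.sum_congr rfl fun s _ => ?_
  rw [mul_ite, mul_zero]
  exact if_congr (by omega) rfl rfl

lemma bstar_mul_xiOf (hPX : ∀ x, 0 ≤ PX x) (hθ : ∀ s, 0 ≤ θ s) (w : ℤ)
    (y : Fin (my + 1)) :
    bstar mx my ms PX θ w y * xiOf mx ms PX θ w
      = extZ PX ((y : ℕ) : ℤ) * extZ θ (((y : ℕ) : ℤ) + w) := by
  by_cases hξ : xiOf mx ms PX θ w = 0
  · rw [bstar, if_pos hξ, zero_mul, eq_comm]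
    by_cases hy : (y : ℕ) ≤ mx
    · -- `ξ(w)` is a sum of nonnegative terms, one of which is `PX(y) θ(y + w)`.
      rw [xiOf_eq_sum_extZ, Finset.sum_eq_zero_iff_of_nonneg
        fun x _ => mul_nonneg (hPX x) (extZ_nonneg hθ _)] at hξ
      have hξy := hξ ⟨y, by omega⟩ (mem_univ _)
      rwa [← extZ_natCast PX, add_comm w] at hξy
    · rw [extZ, dif_neg (by omega), zero_mul]
  · rw [bstar, if_neg hξ, div_mul_cancel₀ _ hξ]

end StructuredPolicy

def Traj.snoc {n : ℕ} (ω : Traj mx my ms n) (x : Fin (mx + 1)) (y : Fin (my + 1)) :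
    Traj mx my ms (n + 1) :=
  (ω.1, Fin.snoc ω.2.1 x, Fin.snoc ω.2.2 y)

section Trajectories

variable {n : ℕ} {ω : Traj mx my ms n} {x : Fin (mx + 1)} {y : Fin (my + 1)}

lemma sum_traj_succ (f : Traj mx my ms (n + 1) → ℝ) :
    ∑ ω, f ω = ∑ ω : Traj mx my ms n, ∑ x, ∑ y, f (ω.snoc x y) := by
  have hbij : Function.Bijective fun q : Traj mx my ms n × Fin (mx + 1) × Fin (my + 1) =>
      q.1.snoc q.2.1 q.2.2 := by
    refine ⟨fun q q' h => ?_, fun ω => ⟨((ω.1, Fin.init ω.2.1, Fin.init ω.2.2),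
      ω.2.1 (Fin.last n), ω.2.2 (Fin.last n)), by simp [Traj.snoc]⟩⟩
    simp only [Traj.snoc, Prod.mk.injEq, Fin.snoc_inj] at h
    ext <;> simp [h]
  simp only [← Fintype.sum_prod_type']
  exact (Fintype.sum_bijective _ hbij _ _ fun _ => rfl).symm

lemma Xat_snoc_of_lt {t : ℕ} (ht : t < n) : Xat (ω.snoc x y) t = Xat ω t := by
  simp [Xat, Traj.snoc, ht, ht.le, Fin.snoc]

lemma Yat_snoc_of_lt {t : ℕ} (ht : t < n) : Yat (ω.snoc x y) t = Yat ω t := by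
  simp [Yat, Traj.snoc, ht, ht.le, Fin.snoc]

lemma Xat_snoc_self : Xat (ω.snoc x y) n = x := by
  simp [Xat, Traj.snoc, Fin.snoc]

lemma Yat_snoc_self : Yat (ω.snoc x y) n = y := by
  simp [Yat, Traj.snoc, Fin.snoc]

lemma Sat_snoc_of_le {t : ℕ} (ht : t ≤ n) : Sat (ω.snoc x y) t = Sat ω t := by
  unfold Sat
  congr 1
  exact Finset.sum_congr rfl fun i hi => by
    rw [Xat_snoc_of_lt (by simp at hi; omega), Yat_snoc_of_lt (by simp at hi; omega)]

lemma Sat_snoc_succ : Sat (ω.snoc x y) (n + 1) = Sat ω n + ((y : ℕ) - (x : ℕ)) := by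
  rw [Sat, Finset.sum_range_succ, ← add_assoc, ← Sat, Sat_snoc_of_le le_rfl,
    Xat_snoc_self, Yat_snoc_self]

lemma Wat_snoc_self : Wat (ω.snoc x y) n = Sat ω n - (x : ℕ) := by
  rw [Wat, Sat_snoc_of_le le_rfl, Xat_snoc_self]

lemma Wat_snoc_of_lt {t : ℕ} (ht : t < n) : Wat (ω.snoc x y) t = Wat ω t := by
  rw [Wat, Wat, Sat_snoc_of_le ht.le, Xat_snoc_of_lt ht]

end Trajectories

lemma hstate_prefX_prefY (ω : Traj mx my ms T) (t : Fin T) :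
    hstate ω.1 (prefX ω t) (prefY ω t) = Sat ω t := by
  rw [hstate, Sat, ← Fin.sum_univ_eq_sum_range]
  congr 1
  refine Finset.sum_congr rfl fun i _ => ?_
  have hi : (i : ℕ) < T := i.isLt.trans t.isLt
  simp [Xat, Yat, hi, prefX, prefY]

lemma structuredPolicyA_prefX_prefY (PX : Fin (mx + 1) → ℝ) (θ : Fin (ms + 1) → ℝ)
    (ω : Traj mx my ms T) (t : Fin T) :
    structuredPolicyA mx my ms PX θ t (prefX ω t) ω.1 (prefY ω t)
      = bstar mx my ms PX θ (Wat ω t) := by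
  funext y
  unfold structuredPolicyA
  rw [hstate_prefX_prefY]
  simp [Wat, Xat, prefX]

lemma jointA_structuredPolicyA (PX : Fin (mx + 1) → ℝ) (θ : Fin (ms + 1) → ℝ)
    (ω : Traj mx my ms T) :
    jointA θ PX (structuredPolicyA mx my ms PX θ) T ω
      = θ ω.1 * ∏ t : Fin T, PX (ω.2.1 t) * bstar mx my ms PX θ (Wat ω t) (ω.2.2 t) := by
  simp only [jointA, structuredPolicyA_prefX_prefY]

lemma jointA_structuredPolicyA_snoc (PX : Fin (mx + 1) → ℝ) (θ : Fin (ms + 1) → ℝ)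
    {n : ℕ} (ω : Traj mx my ms n) (x : Fin (mx + 1)) (y : Fin (my + 1)) :
    jointA θ PX (structuredPolicyA mx my ms PX θ) (n + 1) (ω.snoc x y)
      = jointA θ PX (structuredPolicyA mx my ms PX θ) n ω
        * (PX x * bstar mx my ms PX θ (Sat ω n - (x : ℕ)) y) := by
  simp only [jointA_structuredPolicyA, Fin.prod_univ_castSucc, Fin.val_castSucc, Fin.val_last,
    Wat_snoc_of_lt (Fin.is_lt _), Wat_snoc_self, mul_assoc]
  simp [Traj.snoc]

/-- `(Y^T, S_{T+1})` in the paper's 1-based indexing. -/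
def Traj.outputsState (ω : Traj mx my ms T) : (Fin T → Fin (my + 1)) × ℤ := (ω.2.2, Sat ω T)

lemma Traj.outputsState_snoc_eq_iff {n : ℕ} (ω : Traj mx my ms n) (x : Fin (mx + 1))
    (y' : Fin (my + 1)) (y : Fin (n + 1) → Fin (my + 1)) (s : ℤ) :
    (ω.snoc x y').outputsState = (y, s) ↔ y' = y (Fin.last n) ∧
      ω.outputsState = (Fin.init y, s - (y (Fin.last n) : ℕ) + (x : ℕ)) := by
  rw [← Fin.snoc_init_self y]
  simp only [Traj.outputsState, Sat_snoc_succ]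
  simp only [Prod.mk.injEq, Traj.snoc, Fin.snoc_inj, Fin.init_snoc, Fin.snoc_last]
  constructor
  · rintro ⟨⟨hy, rfl⟩, rfl⟩
    exact ⟨rfl, hy, by ring⟩
  · rintro ⟨rfl, hy, hs⟩
    exact ⟨⟨hy, rfl⟩, by rw [hs]; ring⟩

section StateOutputLaw

variable {PX : Fin (mx + 1) → ℝ} {θ : Fin (ms + 1) → ℝ}

lemma pr_outputsState_succ {n : ℕ} (y : Fin (n + 1) → Fin (my + 1)) (s : ℤ) :
    pr (jointA θ PX (structuredPolicyA mx my ms PX θ) (n + 1)) Traj.outputsState (y, s)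
      = ∑ x, PX x * bstar mx my ms PX θ (s - (y (Fin.last n) : ℕ)) (y (Fin.last n)) *
          pr (jointA θ PX (structuredPolicyA mx my ms PX θ) n) Traj.outputsState
            (Fin.init y, s - (y (Fin.last n) : ℕ) + (x : ℕ)) := by
  simp only [pr, Finset.sum_filter, sum_traj_succ, Traj.outputsState_snoc_eq_iff, ite_and,
    Finset.sum_ite_eq', mem_univ, if_true, Finset.mul_sum]
  rw [Finset.sum_comm]
  refine Finset.sum_congr rfl fun x _ => Finset.sum_congr rfl fun ω _ => ?_
  split_ifs with h
  · have hW : Sat ω n - (x : ℕ) = s - (y (Fin.last n) : ℕ) := by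
      rw [show Sat ω n = _ from congrArg Prod.snd h]
      ring
    rw [jointA_structuredPolicyA_snoc, hW]
    ring
  · rw [mul_zero]

theorem pr_outputsState (hPX : ∀ x, 0 ≤ PX x) (hθ : ∀ s, 0 ≤ θ s) {n : ℕ}
    (y : Fin n → Fin (my + 1)) (s : ℤ) :
    pr (jointA θ PX (structuredPolicyA mx my ms PX θ) n) Traj.outputsState (y, s)
      = (∏ t, extZ PX ((y t : ℕ) : ℤ)) * extZ θ s := by
  induction n generalizing s with
  | zero =>
    simp [pr, Finset.sum_filter, jointA, Traj.outputsState, Sat, extZ_eq_sum_ite,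
      Fintype.sum_prod_type, Subsingleton.elim _ y]
  | succ n ih =>
    set yL := y (Fin.last n)
    set w := s - (yL : ℕ)
    calc _ = ∑ x, PX x * bstar mx my ms PX θ w yL *
          ((∏ t, extZ PX ((Fin.init y t : ℕ) : ℤ)) * extZ θ (w + (x : ℕ))) := by
          rw [pr_outputsState_succ]
          simp only [ih]
          rfl
      _ = bstar mx my ms PX θ w yL * xiOf mx ms PX θ w *
            ∏ t, extZ PX ((Fin.init y t : ℕ) : ℤ) := by
          rw [xiOf_eq_sum_extZ, Finset.mul_sum, Finset.sum_mul]
          refine Finset.sum_congr rfl fun x _ => ?_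
          ring
      _ = _ := by
          rw [bstar_mul_xiOf hPX hθ, show ((yL : ℕ) : ℤ) + w = s by ring,
            Fin.prod_univ_castSucc]
          simp only [Fin.init, yL]
          ring

theorem pr_outputs (hPX : ∀ x, 0 ≤ PX x) (hθ : IsPMF θ) (y : Fin T → Fin (my + 1)) :
    pr (jointA θ PX (structuredPolicyA mx my ms PX θ) T) (fun ω => ω.2.2) y
      = ∏ t, extZ PX ((y t : ℕ) : ℤ) := by
  have hstates : ∀ k : Fin (ms + 1),
      ((k : ℕ) : ℤ) ∈ univ.image fun ω : Traj mx my ms T => Sat ω T := fun k =>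
    Finset.mem_image.mpr ⟨(k, 0, 0), mem_univ _, by simp [Sat, Xat, Yat]⟩
  calc _ = ∑ s ∈ univ.image fun ω : Traj mx my ms T => Sat ω T,
        pr (jointA θ PX (structuredPolicyA mx my ms PX θ) T) Traj.outputsState (y, s) :=
        pr_eq_sum_pr_prodMk _ _ _ y
    _ = _ := by
        simp only [pr_outputsState hPX hθ.1, ← Finset.mul_sum, sum_extZ_eq_sum θ hstates, hθ.2,
          mul_one]

end StateOutputLaw

/-- For the process with `S₁ ~ θ`, i.i.d. demand `~ PX` independent of
`S₁`, outputs drawn according to the structured policy `b*(· | W_t)`, and dynamics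
`S_{t+1} = S_t + Y_t - X_t`: for every horizon `T`, the outputs `Y₁, …, Y_T` are mutually
independent (their joint pmf is the product of the marginals) and each `Y_t` has marginal
pmf `P_X`; i.e. the output process is statistically indistinguishable from the demand. -/
theorem structured_policy_output_iid (mx my ms : ℕ) (hxy : mx ≤ my)
    (PX : Fin (mx + 1) → ℝ) (hPX : IsPMF PX)
    (θ : Fin (ms + 1) → ℝ) (hθ : IsPMF θ) (T : ℕ) :
    let p := jointA (mx := mx) (my := my) (ms := ms) θ PX
      (structuredPolicyA mx my ms PX θ) T
    (∀ y : Fin T → Fin (my + 1),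
        pr p (fun ω => ω.2.2) y = ∏ t : Fin T, extZ PX ((y t : ℕ) : ℤ)) ∧
    (∀ (t : Fin T) (yv : Fin (my + 1)),
        pr p (fun ω => ω.2.2 t) yv = extZ PX ((yv : ℕ) : ℤ)) := by
  intro p
  have houtputs := pr_outputs (my := my) hPX.1 hθ (T := T)
  refine ⟨houtputs, fun t yv => ?_⟩
  rw [pr_comp p (fun ω => ω.2.2) (fun y => y t) yv, Finset.sum_congr rfl fun y _ => houtputs y]
  exact sum_prod_filter_apply_eq (by rw [sum_extZ_of_le PX hxy, hPX.2]) t yv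

end SmartMeter
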